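/- If G is a connected edge-critical triangle-free graph and v is a vertex of degree at least 2, then the set N_2(v) of vertices at distance exactly two from v destabilises G_v, i.e., every maximum independent set of G_v contains a vertex of N_2(v). -/

import Mathlib

open SimpleGraph

/-- The independence number of a graph. -/
noncomputable def indepNum {V : Type} (G : SimpleGraph V) : ℕ :=
  sSup {n : ℕ | ∃ s : Set V, s.Finite ∧ s.ncard = n ∧ ∀ a ∈ s, ∀ b ∈ s, ¬ G.Adj a b}

/-- The number of edges of a graph. -/
noncomputable def numEdges {V : Type} (G : SimpleGraph V) : ℕ := G.edgeSet.ncard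

/-- The degree (valency) of a vertex. -/
noncomputable def deg {V : Type} (G : SimpleGraph V) (v : V) : ℕ := (G.neighborSet v).ncard

/-- The second valency `d²(v) = ∑_{w ∈ N(v)} d(w)`. -/
noncomputable def secondDeg {V : Type} (G : SimpleGraph V) (v : V) : ℕ :=
  ∑ᶠ w ∈ G.neighborSet v, deg G w

/-- `p = (a,b,c,d)` is an (ordered) 4-cycle of `G`. -/
def IsC4 {V : Type} (G : SimpleGraph V) (p : V × V × V × V) : Prop :=
  G.Adj p.1 p.2.1 ∧ G.Adj p.2.1 p.2.2.1 ∧ G.Adj p.2.2.1 p.2.2.2 ∧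
    G.Adj p.2.2.2 p.1 ∧ p.1 ≠ p.2.2.1 ∧ p.2.1 ≠ p.2.2.2

/-- The number of 4-cycles of `G`; each 4-cycle yields 8 ordered tuples. -/
noncomputable def numC4 {V : Type} (G : SimpleGraph V) : ℕ :=
  {p : V × V × V × V | IsC4 G p}.ncard / 8

/-- The number of 4-cycles of `G` containing a vertex of `S`. -/
noncomputable def numC4Through {V : Type} (G : SimpleGraph V) (S : Set V) : ℕ :=
  {p : V × V × V × V | IsC4 G p ∧ (p.1 ∈ S ∨ p.2.1 ∈ S ∨ p.2.2.1 ∈ S ∨ p.2.2.2 ∈ S)}.ncard / 8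

/-- The invariant `ν(G) = 3e(G) − 17n(G) + 35α(G) + N(C₄;G)`. -/
noncomputable def nu {V : Type} (G : SimpleGraph V) : ℤ :=
  3 * (numEdges G : ℤ) - 17 * (Nat.card V : ℤ) + 35 * (_root_.indepNum G : ℤ) + (numC4 G : ℤ)

/-- The closed neighbourhood `N[v]`. -/
def closedNbhd {V : Type} (G : SimpleGraph V) (v : V) : Set V := insert v (G.neighborSet v)

/-- `S` destabilises `G` : removing `S` decreases the independence number. -/
def Destab {V : Type} (G : SimpleGraph V) (S : Set V) : Prop :=
  _root_.indepNum (G.induce Sᶜ) < _root_.indepNum G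

/-- `G` is edge-critical (α-critical): removing any edge increases the independence number. -/
def EdgeCritical {V : Type} (G : SimpleGraph V) : Prop :=
  ∀ e ∈ G.edgeSet, _root_.indepNum G < _root_.indepNum (G.deleteEdges {e})

/-!
The two neighbourhood layers of `v` give two estimates against `α = α(G)`.
Edge-criticality of an edge `vu` yields an independent set of size `α + 1` of `G - vu` through
`v` and `u`; dropping `u` and `v` leaves `α - 1` independent vertices of `G_v`, so
`α - 1 ≤ α(G_v)`. On the other hand, in a triangle-free graph `N(v)` is independent, and every
neighbour of `N(v)` outside `N[v]` lies in `N₂(v)`; so an independent set of `G_v - N₂(v)` can be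
enlarged by `N(v)`, giving `α(G_v - N₂(v)) + deg v ≤ α`. With `deg v ≥ 2` the two combine to
`α(G_v - N₂(v)) < α(G_v)`.
-/

namespace SimpleGraph

variable {V : Type} (G : SimpleGraph V)

lemma isIndepSet_induce_iff {T : Set V} {s : Set T} :
    (G.induce T).IsIndepSet s ↔ G.IsIndepSet (Subtype.val '' s) := by
  simp [Set.Pairwise]

section IndepNum

variable [Finite V]

lemma bddAbove_indepSetCards :
    BddAbove {n : ℕ | ∃ s : Set V, s.Finite ∧ s.ncard = n ∧ ∀ a ∈ s, ∀ b ∈ s, ¬ G.Adj a b} := by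
  refine ⟨Nat.card V, ?_⟩
  rintro _ ⟨s, -, rfl, -⟩
  exact s.ncard_le_card

variable {G}

lemma IsIndepSet.ncard_le_indepNum {s : Set V} (hs : G.IsIndepSet s) :
    s.ncard ≤ _root_.indepNum G :=
  le_csSup (bddAbove_indepSetCards G)
    ⟨s, s.toFinite, rfl, fun _ ha _ hb hab => hs ha hb (G.ne_of_adj hab) hab⟩

variable (G)

lemma exists_isIndepSet_ncard_eq_indepNum :
    ∃ s : Set V, G.IsIndepSet s ∧ s.ncard = _root_.indepNum G := by
  have hmem := Nat.sSup_mem ?_ (bddAbove_indepSetCards G)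
  · obtain ⟨s, -, hs, hind⟩ := hmem
    exact ⟨s, fun a ha b hb _ => hind a ha b hb, hs⟩
  · exact ⟨0, ∅, by simp⟩

lemma exists_isIndepSet_subset_ncard_eq_indepNum_induce (T : Set V) :
    ∃ s ⊆ T, G.IsIndepSet s ∧ s.ncard = _root_.indepNum (G.induce T) := by
  obtain ⟨s, hs, hcard⟩ := exists_isIndepSet_ncard_eq_indepNum (G.induce T)
  refine ⟨Subtype.val '' s, Subtype.coe_image_subset T s, (isIndepSet_induce_iff G).1 hs, ?_⟩
  rw [Set.ncard_image_of_injective _ Subtype.val_injective, hcard]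

variable {G}

lemma IsIndepSet.ncard_le_indepNum_induce {s T : Set V} (hs : G.IsIndepSet s) (hsT : s ⊆ T) :
    s.ncard ≤ _root_.indepNum (G.induce T) := by
  have himage : Subtype.val '' (Subtype.val ⁻¹' s : Set T) = s := by
    rw [Subtype.image_preimage_coe, Set.inter_eq_right.2 hsT]
  have hind : (G.induce T).IsIndepSet (Subtype.val ⁻¹' s) :=
    (isIndepSet_induce_iff G).2 (by rwa [himage])
  calc s.ncard = (Subtype.val ⁻¹' s : Set T).ncard := by
        rw [← Set.ncard_image_of_injective _ Subtype.val_injective, himage]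
    _ ≤ _ := hind.ncard_le_indepNum

end IndepNum

variable {G}

lemma IsIndepSet.of_deleteEdges {u v : V} {s : Set V}
    (hs : (G.deleteEdges {s(u, v)}).IsIndepSet s) (hu : u ∉ s) : G.IsIndepSet s := by
  intro a ha b hb hab hadj
  refine hs ha hb hab ((deleteEdges_adj ..).2 ⟨hadj, fun he => ?_⟩)
  rw [Set.mem_singleton_iff, Sym2.eq_iff] at he
  rcases he with ⟨rfl, -⟩ | ⟨-, rfl⟩ <;> contradiction

lemma IsIndepSet.diff_singleton_subset_compl_closedNbhd {s : Set V} {v : V}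
    (hs : G.IsIndepSet s) (hv : v ∈ s) : s \ {v} ⊆ (closedNbhd G v)ᶜ := by
  rintro a ⟨ha, hav⟩ (rfl | hadj)
  · exact hav rfl
  · exact hs hv ha (Ne.symm hav) hadj

/-- The witness is `J \ {u}` for a maximum independent set `J` of `G - uv`, which must contain
both `u` and `v`. -/
lemma EdgeCritical.exists_isIndepSet_mem_indepNum_le [Finite V] (hec : EdgeCritical G)
    {u v : V} (huv : G.Adj u v) :
    ∃ s : Set V, G.IsIndepSet s ∧ v ∈ s ∧ _root_.indepNum G ≤ s.ncard := by
  obtain ⟨J, hJ, hJcard⟩ := exists_isIndepSet_ncard_eq_indepNum (G.deleteEdges {s(u, v)})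
  have hlt : _root_.indepNum G < J.ncard := hJcard ▸ hec _ huv
  have huJ : u ∈ J := by
    by_contra hu
    exact (hJ.of_deleteEdges hu).ncard_le_indepNum.not_gt hlt
  have hvJ : v ∈ J := by
    by_contra hv
    rw [Sym2.eq_swap] at hJ
    exact (hJ.of_deleteEdges hv).ncard_le_indepNum.not_gt hlt
  refine ⟨J \ {u}, IsIndepSet.of_deleteEdges (hJ.mono Set.sdiff_subset) (fun h => h.2 rfl),
    ⟨hvJ, huv.ne.symm⟩, ?_⟩
  rw [Set.ncard_sdiff_singleton_of_mem huJ]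
  omega

lemma EdgeCritical.indepNum_le_indepNum_induce_compl_closedNbhd_add_one [Finite V]
    (hec : EdgeCritical G) {u v : V} (huv : G.Adj u v) :
    _root_.indepNum G ≤ _root_.indepNum (G.induce (closedNbhd G v)ᶜ) + 1 := by
  obtain ⟨s, hs, hv, hcard⟩ := hec.exists_isIndepSet_mem_indepNum_le huv
  have := IsIndepSet.ncard_le_indepNum_induce (hs.mono Set.sdiff_subset)
    (hs.diff_singleton_subset_compl_closedNbhd hv)
  rw [Set.ncard_sdiff_singleton_of_mem hv] at this
  omega

lemma dist_eq_two_of_adj_of_notMem_closedNbhd {u v a : V} (hvu : G.Adj v u) (hua : G.Adj u a)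
    (ha : a ∉ closedNbhd G v) : G.dist v a = 2 := by
  have hle : G.dist v a ≤ 2 := dist_le (.cons hvu (.cons hua .nil))
  have h0 : G.dist v a ≠ 0 := by
    rw [Ne, (Walk.cons hvu (Walk.cons hua .nil)).reachable.dist_eq_zero_iff]
    exact fun h => ha (h ▸ Set.mem_insert v _)
  have h1 : G.dist v a ≠ 1 := by
    rw [Ne, dist_eq_one_iff_adj]
    exact fun h => ha (Set.mem_insert_of_mem v h)
  omega

lemma ncard_add_deg_le_indepNum [Finite V] (h3 : G.CliqueFree 3) {v : V} {s : Set V}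
    (hs : G.IsIndepSet s) (hsv : ∀ a ∈ s, a ∉ closedNbhd G v ∧ G.dist v a ≠ 2) :
    s.ncard + deg G v ≤ _root_.indepNum G := by
  have hdisj : Disjoint s (G.neighborSet v) :=
    Set.disjoint_left.2 fun a ha hav => (hsv a ha).1 (Set.mem_insert_of_mem v hav)
  have hind : G.IsIndepSet (s ∪ G.neighborSet v) := by
    have hnot : ∀ a ∈ s, ∀ u ∈ G.neighborSet v, ¬ G.Adj u a := fun a ha u hvu hua =>
      (hsv a ha).2 (dist_eq_two_of_adj_of_notMem_closedNbhd hvu hua (hsv a ha).1)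
    exact Set.pairwise_union.2 ⟨hs, isIndepSet_neighborSet_of_triangleFree G h3 v,
      fun a ha u hu _ => ⟨fun hau => hnot a ha u hu hau.symm, hnot a ha u hu⟩⟩
  rw [deg, ← Set.ncard_union_eq hdisj]
  exact hind.ncard_le_indepNum

end SimpleGraph

theorem stmt2_general {V : Type} [Fintype V] (G : SimpleGraph V)
    (hec : EdgeCritical G) (h3 : G.CliqueFree 3) (v : V) (hd : 2 ≤ deg G v) :
    Destab (G.induce (closedNbhd G v)ᶜ) {u | G.dist v ↑u = 2} := by
  obtain ⟨u, hvu⟩ : ∃ u, G.Adj v u := (G.neighborSet v).nonempty_of_ncard_ne_zero <| by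
    unfold deg at hd; omega
  have hlower := hec.indepNum_le_indepNum_induce_compl_closedNbhd_add_one hvu.symm
  obtain ⟨s, hsS, hs, hcard⟩ := exists_isIndepSet_subset_ncard_eq_indepNum_induce
    (G.induce (closedNbhd G v)ᶜ) {u | G.dist v ↑u = 2}ᶜ
  have hupper := ncard_add_deg_le_indepNum (v := v) h3 ((isIndepSet_induce_iff G).1 hs) <| by
    rintro _ ⟨a, ha, rfl⟩
    exact ⟨a.2, hsS ha⟩
  rw [Set.ncard_image_of_injective _ Subtype.val_injective, hcard] at hupper
  unfold Destab
  omega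

/-- If `G` is a connected edge-critical triangle-free graph and `deg v ≥ 2`,
then the set of vertices at distance exactly two from `v` destabilises `G_v`. -/
theorem stmt2 {V : Type} [Fintype V] (G : SimpleGraph V) (hconn : G.Connected)
    (hec : EdgeCritical G) (h3 : G.CliqueFree 3) (v : V) (hd : 2 ≤ deg G v) :
    Destab (G.induce (closedNbhd G v)ᶜ) {u | G.dist v ↑u = 2} :=
  stmt2_general G hec h3 v hd
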